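/- arXiv:2410.22435 — 5 statements merged into one kernel-verified Lean document; each statement's English description precedes it below -/
import Mathlib

section
/- Let w ∈ ℝ^{n^k} be indexed by tuples t : {1,…,k} → {1,…,n}, and let c_1,…,c_n ∈ ℝ. Then wᵀ x^{⊗k} = Σ_{i=1}^n c_i x_i^k for all x ∈ ℝ^n if and only if w_{(i,i,…,i)} = c_i for each i ∈ {1,…,n} and Σ_{t ∈ C} w_t = 0 for every off-diagonal equivalence class C of tuples. -/
open Finset
open scoped Classical

noncomputable def cnt {n k : ℕ} (t : Fin k → Fin n) : Fin n →₀ ℕ :=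
  ∑ i, Finsupp.single (t i) 1

lemma cnt_apply {n k : ℕ} (t : Fin k → Fin n) (j : Fin n) :
    cnt t j = (univ.filter (fun i => t i = j)).card := by
  rw [cnt, Finsupp.finset_sum_apply, Finset.card_filter]
  refine Finset.sum_congr rfl fun i _ => ?_
  simp [Finsupp.single_apply]

lemma cnt_comp_perm {n k : ℕ} (t : Fin k → Fin n) (π : Equiv.Perm (Fin k)) :
    cnt (t ∘ π) = cnt t :=
  Equiv.sum_comp π (fun i => Finsupp.single (t i) 1)

lemma card_fiber {n k : ℕ} (t : Fin k → Fin n) (j : Fin n) :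
    Fintype.card (t ⁻¹' {j}) = cnt t j := by
  rw [cnt_apply]
  simp [Fintype.card_subtype, Set.preimage, Set.mem_singleton_iff]

lemma exists_perm_of_cnt_eq {n k : ℕ} {t s : Fin k → Fin n} (h : cnt t = cnt s) :
    ∃ π : Equiv.Perm (Fin k), t = s ∘ ⇑π := by
  have e : ∀ j, (t ⁻¹' {j}) ≃ (s ⁻¹' {j}) := fun j =>
    Fintype.equivOfCardEq (by rw [card_fiber, card_fiber, h])
  refine ⟨Equiv.ofFiberEquiv e, ?_⟩
  funext a
  exact (Equiv.ofFiberEquiv_map e a).symm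

lemma cnt_const {n k : ℕ} (i : Fin n) : cnt (fun _ : Fin k => i) = Finsupp.single i k := by
  rw [cnt]
  simp [Finset.sum_const, Finsupp.smul_single]

lemma eq_const_of_cnt {n k : ℕ} {t : Fin k → Fin n} {i : Fin n}
    (h : cnt t = Finsupp.single i k) : t = fun _ => i := by
  funext a
  have h1 : cnt t (t a) ≠ 0 := by
    rw [cnt_apply]
    simp only [ne_eq, Finset.card_eq_zero, Finset.filter_eq_empty_iff]
    push_neg
    exact ⟨a, Finset.mem_univ a, rfl⟩
  rw [h] at h1
  by_contra hne
  rw [Finsupp.single_apply, if_neg (fun hh => hne hh.symm)] at h1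
  exact h1 rfl

lemma class_eq_cnt_filter {n k : ℕ} (t₀ : Fin k → Fin n) :
    univ.filter (fun t => ∃ π : Equiv.Perm (Fin k), t = t₀ ∘ ⇑π) =
      univ.filter (fun t => cnt t = cnt t₀) := by
  ext t
  simp only [mem_filter, mem_univ, true_and]
  constructor
  · rintro ⟨π, rfl⟩; exact cnt_comp_perm t₀ π
  · exact exists_perm_of_cnt_eq

lemma prod_pow_cnt {n k : ℕ} (t : Fin k → Fin n) (x : Fin n → ℝ) :
    ∏ j, x j ^ cnt t j = ∏ i, x (t i) := by
  rw [← Finset.prod_fiberwise_of_maps_to (fun i _ => Finset.mem_univ (t i)) (fun i => x (t i))]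
  refine Finset.prod_congr rfl fun j _ => ?_
  rw [cnt_apply,
    Finset.prod_congr rfl (fun i hi => by rw [(Finset.mem_filter.mp hi).2] : ∀ i ∈ univ.filter (fun i => t i = j), x (t i) = x j),
    Finset.prod_const]

/-- Identifying `ℝ^{n^k}` with functions on index tuples `t : Fin k → Fin n`,
`wᵀ x^{⊗k} = Σ_{i=1}^n c_i x_i^k` for all `x` iff the diagonal entries satisfy
`w_{(i,…,i)} = c_i` and the entries of `w` sum to zero over every off-diagonal
permutation-equivalence class of tuples. -/
theorem kron_diagonal_iff {n k : ℕ} (hk : 1 ≤ k)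
    (w : (Fin k → Fin n) → ℝ) (c : Fin n → ℝ) :
    (∀ x : Fin n → ℝ, ∑ t : Fin k → Fin n, w t * ∏ i, x (t i) = ∑ i : Fin n, c i * x i ^ k) ↔
      ((∀ i : Fin n, w (fun _ => i) = c i) ∧
        ∀ t₀ : Fin k → Fin n, (¬ ∀ a b : Fin k, t₀ a = t₀ b) →
          ∑ t ∈ Finset.univ.filter (fun t => ∃ π : Equiv.Perm (Fin k), t = t₀ ∘ ⇑π), w t = 0) := by
  have hk0 : k ≠ 0 := by omega
  set P : MvPolynomial (Fin n) ℝ :=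
    ∑ t : Fin k → Fin n, MvPolynomial.monomial (cnt t) (w t) with hPdef
  set Q : MvPolynomial (Fin n) ℝ :=
    ∑ i : Fin n, MvPolynomial.monomial (Finsupp.single i k) (c i) with hQdef
  have evalP : ∀ x : Fin n → ℝ,
      MvPolynomial.eval x P = ∑ t : Fin k → Fin n, w t * ∏ i, x (t i) := by
    intro x
    rw [hPdef, map_sum]
    refine Finset.sum_congr rfl fun t _ => ?_
    rw [MvPolynomial.eval_monomial, Finsupp.prod_fintype _ _ (fun j => pow_zero (x j)),
      prod_pow_cnt]
  have evalQ : ∀ x : Fin n → ℝ,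
      MvPolynomial.eval x Q = ∑ i : Fin n, c i * x i ^ k := by
    intro x
    rw [hQdef, map_sum]
    refine Finset.sum_congr rfl fun i _ => ?_
    simp [MvPolynomial.eval_monomial, Finsupp.prod_single_index (pow_zero (x i))]
  have coeffP : ∀ d : Fin n →₀ ℕ,
      MvPolynomial.coeff d P = ∑ t ∈ univ.filter (fun t => cnt t = d), w t := by
    intro d
    rw [hPdef, MvPolynomial.coeff_sum, Finset.sum_filter]
    refine Finset.sum_congr rfl fun t _ => ?_
    rw [MvPolynomial.coeff_monomial]
  have coeffQ : ∀ d : Fin n →₀ ℕ,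
      MvPolynomial.coeff d Q = ∑ i ∈ univ.filter (fun i => Finsupp.single i k = d), c i := by
    intro d
    rw [hQdef, MvPolynomial.coeff_sum, Finset.sum_filter]
    refine Finset.sum_congr rfl fun i _ => ?_
    rw [MvPolynomial.coeff_monomial]
  have hdiagfilter : ∀ i : Fin n,
      univ.filter (fun t : Fin k → Fin n => cnt t = Finsupp.single i k) = {fun _ => i} := by
    intro i
    ext t
    simp only [mem_filter, mem_univ, true_and, Finset.mem_singleton]
    exact ⟨fun h => eq_const_of_cnt h, fun h => by rw [h, cnt_const]⟩
  have hsinglefilter : ∀ i : Fin n,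
      univ.filter (fun i' : Fin n => Finsupp.single i' k = Finsupp.single i k) = {i} := by
    intro i
    ext i'
    simp only [mem_filter, mem_univ, true_and, Finset.mem_singleton]
    exact ⟨fun h => Finsupp.single_left_injective hk0 h, fun h => by rw [h]⟩
  have hnotdiag : ∀ (t₀ : Fin k → Fin n), (¬ ∀ a b : Fin k, t₀ a = t₀ b) →
      ∀ i : Fin n, Finsupp.single i k ≠ cnt t₀ := by
    intro t₀ ht₀ i hcontra
    apply ht₀
    intro a b
    have := eq_const_of_cnt hcontra.symm
    rw [this]
  have hiff : (∀ x : Fin n → ℝ,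
      ∑ t : Fin k → Fin n, w t * ∏ i, x (t i) = ∑ i : Fin n, c i * x i ^ k) ↔ P = Q := by
    constructor
    · intro h
      exact MvPolynomial.funext fun x => by rw [evalP, evalQ]; exact h x
    · intro h x
      rw [← evalP, ← evalQ, h]
  rw [hiff]
  constructor
  · intro h
    constructor
    · intro i
      have hc := congrArg (MvPolynomial.coeff (Finsupp.single i k)) h
      rw [coeffP, coeffQ, hdiagfilter, hsinglefilter, Finset.sum_singleton,
        Finset.sum_singleton] at hc
      exact hc
    · intro t₀ ht₀
      have hc := congrArg (MvPolynomial.coeff (cnt t₀)) h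
      rw [coeffP, coeffQ] at hc
      rw [class_eq_cnt_filter, hc]
      rw [Finset.filter_false_of_mem (fun i _ => hnotdiag t₀ ht₀ i), Finset.sum_empty]
  · rintro ⟨h1, h2⟩
    apply MvPolynomial.ext
    intro d
    rw [coeffP, coeffQ]
    by_cases hd : ∃ i : Fin n, Finsupp.single i k = d
    · obtain ⟨i, rfl⟩ := hd
      rw [hdiagfilter, hsinglefilter, Finset.sum_singleton, Finset.sum_singleton]
      exact h1 i
    · push_neg at hd
      rw [Finset.filter_false_of_mem (fun i _ => hd i), Finset.sum_empty]
      by_cases ht : ∃ t₀ : Fin k → Fin n, cnt t₀ = d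
      · obtain ⟨t₀, rfl⟩ := ht
        have ht₀ : ¬ ∀ a b : Fin k, t₀ a = t₀ b := by
          intro hconst
          have a₀ : Fin k := ⟨0, hk⟩
          have : t₀ = fun _ => t₀ a₀ := funext fun b => hconst b a₀
          exact hd (t₀ a₀) (by rw [this, cnt_const])
        rw [← class_eq_cnt_filter]
        exact h2 t₀ ht₀
      · push_neg at ht
        rw [Finset.filter_false_of_mem (fun t _ => ht t), Finset.sum_empty]
end

section
/- Let σ_1, …, σ_n be distinct positive real numbers and k ≥ 2. For every off-diagonal equivalence class C of tuples t : {1,…,k} → {1,…,n}, the function t ↦ σ_{t(k)}² is non-constant on C; consequently, the vector r̂_C ∈ ℝ^{n^k} with entries σ_{t(k)}² for t ∈ C and 0 elsewhere is not a scalar multiple of the indicator vector 1_C of C. -/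
open scoped Classical

/-- Let `σ_1, …, σ_n` be distinct positive reals and `k ≥ 2`. On every
off-diagonal permutation-equivalence class of tuples `t : Fin k → Fin n`, the function
`t ↦ σ_{t(k)}²` is non-constant; consequently the vector with entries `σ_{t(k)}²` on the class
and `0` elsewhere is not a scalar multiple of the indicator vector of the class. -/
theorem offdiagonal_sigma_nonconstant {n k : ℕ} (hk : 2 ≤ k)
    (σ : Fin n → ℝ) (hσpos : ∀ i, 0 < σ i) (hσinj : Function.Injective σ)
    (t₀ : Fin k → Fin n) (hoff : ¬ ∀ a b : Fin k, t₀ a = t₀ b) :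
    (∃ s₁ s₂ : Fin k → Fin n,
      (∃ π : Equiv.Perm (Fin k), s₁ = t₀ ∘ ⇑π) ∧
      (∃ π : Equiv.Perm (Fin k), s₂ = t₀ ∘ ⇑π) ∧
      σ (s₁ ⟨k - 1, by omega⟩) ^ 2 ≠ σ (s₂ ⟨k - 1, by omega⟩) ^ 2) ∧
    ∀ c : ℝ,
      (fun t : Fin k → Fin n =>
        if ∃ π : Equiv.Perm (Fin k), t = t₀ ∘ ⇑π then σ (t ⟨k - 1, by omega⟩) ^ 2 else 0) ≠
      c • (fun t : Fin k → Fin n =>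
        if ∃ π : Equiv.Perm (Fin k), t = t₀ ∘ ⇑π then (1 : ℝ) else 0) := by
  push_neg at hoff
  obtain ⟨a, b, hab⟩ := hoff
  set L : Fin k := ⟨k - 1, by omega⟩ with hL
  set s₁ : Fin k → Fin n := t₀ ∘ (Equiv.swap L a) with hs₁
  set s₂ : Fin k → Fin n := t₀ ∘ (Equiv.swap L b) with hs₂
  have h₁ : s₁ L = t₀ a := by simp [hs₁, Equiv.swap_apply_left]
  have h₂ : s₂ L = t₀ b := by simp [hs₂, Equiv.swap_apply_left]
  have hne : σ (s₁ L) ^ 2 ≠ σ (s₂ L) ^ 2 := by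
    rw [h₁, h₂]
    intro h
    have h' : σ (t₀ a) = σ (t₀ b) := by
      nlinarith [hσpos (t₀ a), hσpos (t₀ b)]
    exact hab (hσinj h')
  refine ⟨⟨s₁, s₂, ⟨_, rfl⟩, ⟨_, rfl⟩, hne⟩, ?_⟩
  intro c hc
  have e₁ := congrFun hc s₁
  have e₂ := congrFun hc s₂
  simp only [Pi.smul_apply, smul_eq_mul] at e₁ e₂
  rw [if_pos ⟨_, rfl⟩, if_pos ⟨_, rfl⟩] at e₁
  rw [if_pos ⟨_, rfl⟩, if_pos ⟨_, rfl⟩] at e₂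
  exact hne (by rw [e₁, e₂])
end

section
/- Let σ_1, …, σ_n be distinct positive real numbers and k ≥ 3. Define the linear map 𝒜 : ℝ^{n^k} → ℝ^{#(all classes)} × ℝ^{#(off-diagonal classes)} by 𝒜(w) = ( (2 Σ_{t∈C} w_t)_{C any class}, (2 Σ_{t∈C} σ_{t(k)}² w_t)_{C off-diagonal class} ). Then 𝒜 is surjective; equivalently, the family of vectors {1_C : C any class} ∪ {r̂_C : C off-diagonal class}, where r̂_C has entries σ_{t(k)}² on C and 0 elsewhere, is linearly independent in ℝ^{n^k}. In particular, the underdetermined linear system 𝒜(w) = b (the input-normal/output-diagonal equations for the transformation coefficient) has a solution w for every right-hand side b. -/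
open Finset
open scoped Classical

/-- Two index tuples are equivalent if one is a rearrangement of the other. -/
def permSetoid (n k : ℕ) : Setoid (Fin k → Fin n) where
  r t s := ∃ π : Equiv.Perm (Fin k), s = t ∘ ⇑π
  iseqv := by
    refine ⟨fun t => ⟨1, ?_⟩, ?_, ?_⟩
    · ext i; simp
    · rintro t s ⟨π, rfl⟩
      exact ⟨π⁻¹, by ext i; simp⟩
    · rintro t s u ⟨π, rfl⟩ ⟨ρ, rfl⟩
      exact ⟨π * ρ, by ext i; simp [Equiv.Perm.mul_apply]⟩

/-- The permutation-equivalence classes of index tuples (i.e. degree-`k` monomials). -/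
abbrev MonClass (n k : ℕ) := Quotient (permSetoid n k)

/-- A class is off-diagonal if its tuples attain at least two distinct values. -/
def IsOffdiagClass {n k : ℕ} (C : MonClass n k) : Prop :=
  ∃ t : Fin k → Fin n, Quotient.mk (permSetoid n k) t = C ∧ ¬ ∀ a b : Fin k, t a = t b

/-- The finset of tuples belonging to a class `C`. -/
noncomputable def classTuples {n k : ℕ} (C : MonClass n k) : Finset (Fin k → Fin n) :=
  Finset.univ.filter (fun t => Quotient.mk (permSetoid n k) t = C)

/-!
Every vector of the family is supported on a single class, so a vanishing linear combination, with
coefficients `g₁(C)` of `1_C` and `g₂(C)` of `r̂_C`, can be tested class by class. Evaluating it at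
a tuple `t` of the class `C` gives
`g₁(C) + g₂(C) σ_{t(k)}² = 0`. An off-diagonal class contains, after permuting, two tuples with
different last entries, hence different `σ²`, so `g₂(C) = 0` and then `g₁(C) = 0`. Surjectivity of
`𝒜` follows because a matrix with linearly independent rows has full row rank.
-/

theorem LinearIndependent.mulVec_surjective {R m n : Type*} [Field R] [Fintype m] [Fintype n]
    {A : Matrix m n R} (h : LinearIndependent R A.row) : Function.Surjective A.mulVec := by
  have hrange : LinearMap.range A.mulVecLin = ⊤ := Submodule.eq_top_of_finrank_eq <| by
    rw [← Matrix.rank, h.rank_matrix, Module.finrank_fintype_fun_eq_card]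
  exact LinearMap.range_eq_top.mp hrange

section ClassIndicators

variable {K α : Type*} [Field K] (s : Setoid α) (P : Quotient s → Prop) (ρ : α → K)

noncomputable def classIndicatorFamily : Quotient s ⊕ {C // P C} → α → K :=
  Sum.elim (fun C t => if Quotient.mk s t = C then 1 else 0)
    (fun C t => if Quotient.mk s t = C.1 then ρ t else 0)

variable {s P ρ} [Fintype α]

theorem sum_smul_classIndicatorFamily_apply (g : Quotient s ⊕ {C // P C} → K) (t : α) :
    (∑ i, g i • classIndicatorFamily s P ρ i) t =
      g (.inl (Quotient.mk s t)) +
        if h : P (Quotient.mk s t) then g (.inr ⟨_, h⟩) * ρ t else 0 := by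
  simp only [classIndicatorFamily, Finset.sum_apply, Pi.smul_apply, smul_eq_mul,
    Fintype.sum_sum_type, Sum.elim_inl, Sum.elim_inr, mul_ite, mul_one, mul_zero,
    Finset.sum_ite_eq, Finset.mem_univ, if_true]
  split_ifs with h
  · simp_rw [← Subtype.ext_iff (a1 := ⟨_, h⟩), Finset.sum_ite_eq, Finset.mem_univ, if_true]
  · have hC : ∀ C : {C // P C}, Quotient.mk s t ≠ C.1 := fun C hC => h (hC ▸ C.2)
    simp [hC]

theorem linearIndependent_classIndicatorFamily
    (hρ : ∀ C, P C → ∃ t₁ t₂, Quotient.mk s t₁ = C ∧ Quotient.mk s t₂ = C ∧ ρ t₁ ≠ ρ t₂) :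
    LinearIndependent K (classIndicatorFamily s P ρ) := by
  rw [Fintype.linearIndependent_iff]
  intro g hg
  have hev t := (sum_smul_classIndicatorFamily_apply g t).symm.trans (congrFun hg t)
  have hinr : ∀ C : {C // P C}, g (.inr C) = 0 := by
    rintro ⟨C, hC⟩
    obtain ⟨t₁, t₂, rfl, h₂, hne⟩ := hρ C hC
    have e₁ := hev t₁
    have e₂ := hev t₂
    rw [dif_pos hC] at e₁
    simp only [h₂, dif_pos hC] at e₂
    have : g (.inr ⟨_, hC⟩) * (ρ t₁ - ρ t₂) = 0 := by linear_combination e₁ - e₂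
    exact (mul_eq_zero.mp this).resolve_right (sub_ne_zero.mpr hne)
  have hinl : ∀ C, g (.inl C) = 0 :=
    Quotient.ind fun t => by simpa [hinr] using hev t
  rintro (C | C)
  exacts [hinl C, hinr C]

end ClassIndicators

theorem IsOffdiagClass.exists_apply_ne {n k : ℕ} {C : MonClass n k} (hC : IsOffdiagClass C)
    (j : Fin k) : ∃ t₁ t₂ : Fin k → Fin n, Quotient.mk (permSetoid n k) t₁ = C ∧
      Quotient.mk (permSetoid n k) t₂ = C ∧ t₁ j ≠ t₂ j := by
  obtain ⟨t, rfl, hnc⟩ := hC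
  simp only [not_forall] at hnc
  obtain ⟨a, b, hab⟩ := hnc
  exact ⟨t ∘ Equiv.swap a j, t ∘ Equiv.swap b j,
    (Quotient.sound (s := permSetoid n k) ⟨_, rfl⟩).symm,
    (Quotient.sound (s := permSetoid n k) ⟨_, rfl⟩).symm, by simpa using hab⟩

/-- For distinct positive `σ_1, …, σ_n` and `k ≥ 3`, the linear map
`𝒜(w) = ((2 Σ_{t∈C} w_t)_C, (2 Σ_{t∈C} σ_{t(k)}² w_t)_{C off-diagonal})` is surjective
(the input-normal/output-diagonal equations are solvable for every right-hand side);
equivalently, the family `{1_C} ∪ {r̂_C : C off-diagonal}` is linearly independent. -/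
theorem inod_equations_solvable {n k : ℕ} (hk : 3 ≤ k)
    (σ : Fin n → ℝ) (hσpos : ∀ i, 0 < σ i) (hσinj : Function.Injective σ) :
    (∀ (b₁ : MonClass n k → ℝ) (b₂ : {C : MonClass n k // IsOffdiagClass C} → ℝ),
      ∃ w : (Fin k → Fin n) → ℝ,
        (∀ C : MonClass n k, 2 * ∑ t ∈ classTuples C, w t = b₁ C) ∧
        (∀ C : {C : MonClass n k // IsOffdiagClass C},
          2 * ∑ t ∈ classTuples C.1, σ (t ⟨k - 1, by omega⟩) ^ 2 * w t = b₂ C)) ∧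
    LinearIndependent ℝ
      (fun i : MonClass n k ⊕ {C : MonClass n k // IsOffdiagClass C} =>
        Sum.elim
          (fun C : MonClass n k => fun t : Fin k → Fin n =>
            if Quotient.mk (permSetoid n k) t = C then (1 : ℝ) else 0)
          (fun C : {C : MonClass n k // IsOffdiagClass C} => fun t : Fin k → Fin n =>
            if Quotient.mk (permSetoid n k) t = C.1 then σ (t ⟨k - 1, by omega⟩) ^ 2 else 0)
          i) := by
  set last : Fin k := ⟨k - 1, by omega⟩
  have hindep : LinearIndependent ℝ
      (classIndicatorFamily (permSetoid n k) IsOffdiagClass fun t => σ (t last) ^ 2) :=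
    linearIndependent_classIndicatorFamily fun C hC => by
      obtain ⟨t₁, t₂, h₁, h₂, hne⟩ := hC.exists_apply_ne last
      refine ⟨t₁, t₂, h₁, h₂, fun h => hne (hσinj ?_)⟩
      exact (pow_left_inj₀ (hσpos _).le (hσpos _).le two_ne_zero).mp h
  refine ⟨fun b₁ b₂ => ?_, hindep⟩
  obtain ⟨w, hw⟩ := hindep.mulVec_surjective ((2 : ℝ)⁻¹ • Sum.elim b₁ b₂)
  refine ⟨w, fun C => ?_, fun C => ?_⟩
  · have h := congrFun hw (.inl C)
    simp only [Matrix.mulVec, dotProduct, Sum.elim_inl, ite_mul, one_mul,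
      zero_mul, Pi.smul_apply, smul_eq_mul] at h
    rw [classTuples, Finset.sum_filter, h, mul_inv_cancel_left₀ two_ne_zero]
  · have h := congrFun hw (.inr C)
    simp only [Matrix.mulVec, dotProduct, Sum.elim_inr, ite_mul,
      zero_mul, Pi.smul_apply, smul_eq_mul] at h
    rw [classTuples, Finset.sum_filter, h, mul_inv_cancel_left₀ two_ne_zero]
end

section
/- For all integers n ≥ 3 and k ≥ 3, 2·C(n+k−1, k) − n < n·C(n+k−2, k−1); that is, the total number of input-normal and output-diagonal equations for the degree-(k−1) transformation coefficient is strictly less than the number n·C(n+k−2, k−1) of independent (symmetry-reduced) unknowns, so the transformation coefficients are not uniquely determined. -/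
/-- For `n, k ≥ 3`, the number `2·C(n+k−1,k) − n` of input-normal and
output-diagonal equations is strictly less than the number `n·C(n+k−2,k−1)` of
symmetry-reduced unknowns of the transformation coefficient, so the coefficients are not
uniquely determined. -/
theorem equations_lt_unknowns (n k : ℕ) (hn : 3 ≤ n) (hk : 3 ≤ k) :
    2 * (n + k - 1).choose k - n < n * (n + k - 2).choose (k - 1) := by
  obtain ⟨C, hC⟩ : ∃ c, c = (n + k - 1).choose k := ⟨_, rfl⟩
  obtain ⟨m, hm⟩ : ∃ c, c = (n + k - 2).choose (k - 1) := ⟨_, rfl⟩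
  rw [← hC, ← hm]
  have hid : (n + k - 1) * m = C * k := by
    have h := Nat.add_one_mul_choose_eq (n + k - 2) (k - 1)
    have h1 : n + k - 2 + 1 = n + k - 1 := by omega
    have h2 : k - 1 + 1 = k := by omega
    simp only [Nat.succ_eq_add_one, h1, h2] at h
    rw [hC, hm]
    exact h
  have hkey : 2 * C * k < (n * m + n) * k := by
    have hrw : 2 * C * k = 2 * ((n + k - 1) * m) := by rw [hid]; ring
    rw [hrw]
    by_cases hnk : n = 3 ∧ k = 3
    · obtain ⟨rfl, rfl⟩ := hnk
      have : m = 6 := by rw [hm]; decide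
      rw [this]; norm_num
    · have h2 : 2 * (n + k - 1) ≤ n * k := by
        obtain ⟨a, rfl⟩ : ∃ a, n = a + 3 := ⟨n - 3, by omega⟩
        obtain ⟨b, rfl⟩ : ∃ b, k = b + 3 := ⟨k - 3, by omega⟩
        have hab : 1 ≤ a + b := by
          rcases Nat.eq_zero_or_pos a with ha | ha
          · rcases Nat.eq_zero_or_pos b with hb | hb
            · exact absurd ⟨by omega, by omega⟩ hnk
            · omega
          · omega
        have hr : a + 3 + (b + 3) - 1 = a + b + 5 := by omega
        rw [hr]
        nlinarith
      have h3 : 2 * ((n + k - 1) * m) ≤ n * k * m := by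
        calc 2 * ((n + k - 1) * m) = (2 * (n + k - 1)) * m := by ring
          _ ≤ n * k * m := Nat.mul_le_mul_right m h2
      have h4 : 0 < n * k := by positivity
      calc 2 * ((n + k - 1) * m) ≤ n * k * m := h3
        _ < n * k * m + n * k := by omega
        _ = (n * m + n) * k := by ring
  have hk0 : 0 < k := by omega
  have h5 : 2 * C < n * m + n := Nat.lt_of_mul_lt_mul_right hkey
  have hmpos : 0 < m := by rw [hm]; exact Nat.choose_pos (by omega)
  have h6 : n ≤ n * m := Nat.le_mul_of_pos_right n hmpos
  omega
end

section
/- For all integers n ≥ 1 and k ≥ 2, 2·C(n+k−1, k) − n ≤ n^k; that is, the combined number of input-normal equations (C(n+k−1,k)) and output-diagonal equations (C(n+k−1,k) − n) is at most the number n^k of entries of the unknown coefficient matrix T_{k−1} ∈ ℝ^{n×n^{k−1}}. -/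
lemma aux (m : ℕ) : ∀ k, 2 ≤ k → 2 * (m + k).choose k ≤ (m+1)^k + (m+1) := by
  intro k hk
  induction k with
  | zero => omega
  | succ k ih =>
    rcases Nat.lt_or_ge k 2 with h2 | h2
    · interval_cases k
      · omega
      · show 2 * (m + 2).choose 2 ≤ (m+1)^2 + (m+1)
        have h1 : (m + 2) * (m + 1).choose 1 = (m + 2).choose 2 * 2 :=
          Nat.add_one_mul_choose_eq (m+1) 1
        simp [Nat.choose_one_right] at h1
        nlinarith [h1]
    · have ih := ih h2
      show 2 * (m + k + 1).choose (k+1) ≤ (m+1)^(k+1) + (m+1)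
      have key : (m + k + 1) * (m + k).choose k = (m + k + 1).choose (k+1) * (k+1) :=
        Nat.add_one_mul_choose_eq (m+k) k
      have hpow : (m+1) ≤ k * (m+1)^k := by
        calc (m+1) ≤ (m+1)^k := Nat.le_self_pow (by omega) _
        _ ≤ k * (m+1)^k := Nat.le_mul_of_pos_left _ (by omega)
      have step : (m + k + 1) * ((m+1)^k + (m+1)) ≤ (k+1) * ((m+1)^(k+1) + (m+1)) := by
        have hps : (m+1)^(k+1) = (m+1)^k * (m+1) := pow_succ _ _
        nlinarith [hpow]
      have main : 2 * ((m + k + 1).choose (k+1)) * (k+1) ≤ ((m+1)^(k+1) + (m+1)) * (k+1) := by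
        calc 2 * ((m + k + 1).choose (k+1)) * (k+1)
            = (m + k + 1) * (2 * (m + k).choose k) := by rw [mul_assoc, ← key]; ring
        _ ≤ (m + k + 1) * ((m+1)^k + (m+1)) := Nat.mul_le_mul_left _ ih
        _ ≤ (k+1) * ((m+1)^(k+1) + (m+1)) := step
        _ = ((m+1)^(k+1) + (m+1)) * (k+1) := by ring
      exact Nat.le_of_mul_le_mul_right main (by omega)

/-- For `n ≥ 1` and `k ≥ 2`, the combined number `2·C(n+k−1,k) − n` of
input-normal and output-diagonal equations is at most the number `n^k` of entries of the
unknown coefficient matrix `T_{k−1} ∈ ℝ^{n × n^{k−1}}`. -/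
theorem equations_le_entries (n k : ℕ) (hn : 1 ≤ n) (hk : 2 ≤ k) :
    2 * (n + k - 1).choose k - n ≤ n ^ k := by
  obtain ⟨m, rfl⟩ := Nat.exists_eq_add_of_le' hn
  have h := aux m k hk
  have h2 : m + 1 + k - 1 = m + k := by omega
  rw [h2]
  omega
end
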